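/- The timed step simulation preorder is a precongruence for parallel composition: let T₁, T₂, T₃ be TTSBs with T₁ and T₂ comparable, T₁ ≼ T₂, and both T₁ and T₂ compatible with T₃; then T₁‖T₃ ≼ T₂‖T₃. -/

import Mathlib

open Classical

noncomputable section

namespace TTSBpaper

/-! ### Partial functions / valuations -/

/-- The domain of a partial function. -/
def dom {α β : Type*} (f : α → Option β) : Set α := {x | f x ≠ none}

/-- The override operator. -/
def override {α β : Type*} (f g : α → Option β) : α → Option β :=
  fun x => if x ∈ dom f then f x else g x

/-- Restriction of a partial function to a set. -/
def restrictV {α β : Type*} (f : α → Option β) (X : Set α) : α → Option β :=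
  fun x => if x ∈ X then f x else none

/-- Compatibility of partial functions. -/
def compatV {α β : Type*} (f g : α → Option β) : Prop :=
  ∀ x ∈ dom f ∩ dom g, f x = g x

/-- Update of f according to g. -/
def updV {α β : Type*} (f g : α → Option β) : α → Option β :=
  restrictV (override g f) (dom f)

/-- A property P (a set of valuations over V) does not depend on the variables in W. -/
def indep {α β : Type*} (V W : Set α) (P : Set (α → Option β)) : Prop :=
  ∀ v u, dom v = V → dom u = W → (v ∈ P ↔ updV v u ∈ P)

variable {Var Data BCh CCh : Type}

/-- Values: nonnegative reals for clocks, plus arbitrary data. -/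
abbrev Value (Data : Type) : Type := NNReal ⊕ Data

/-- Valuations over a universal set of variables, as partial functions. -/
abbrev Valn (Var Data : Type) : Type := Var → Option (Value Data)

/-- Singleton valuation. -/
def single (x : Var) (v : Value Data) : Valn Var Data :=
  fun y => if y = x then some v else none

/-- Time shift v ⊕ d : all clocks (variables in X) advance by d. -/
def oplus (X : Set Var) (v : Valn Var Data) (d : NNReal) : Valn Var Data :=
  fun y => if y ∈ X then (v y).map (Sum.map (fun r => r + d) id) else v y

/-- A property is left-closed w.r.t. time passage. -/
def leftClosed (X : Set Var) (P : Set (Valn Var Data)) : Prop :=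
  ∀ v d, oplus X v d ∈ P → v ∈ P

/-! ### Actions -/

/-- Actions: broadcast output/input, binary output/input, internal, and time passage. -/
inductive Act (BCh CCh : Type) : Type where
  | bsend : BCh → Act BCh CCh
  | brecv : BCh → Act BCh CCh
  | send : CCh → Act BCh CCh
  | recv : CCh → Act BCh CCh
  | tau : Act BCh CCh
  | delay : NNReal → Act BCh CCh

/-- Binary actions. -/
def Act.isBinary : Act BCh CCh → Prop
  | .send _ => True
  | .recv _ => True
  | _ => False

/-- Binary or broadcast actions. -/
def Act.isSync : Act BCh CCh → Prop
  | .send _ => True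
  | .recv _ => True
  | .bsend _ => True
  | .brecv _ => True
  | _ => False

/-- Actions removed by restriction to channel sets Cb, Cc. -/
def Act.removedBy (Cb : Set BCh) (Cc : Set CCh) : Act BCh CCh → Prop
  | .brecv d => d ∈ Cb
  | .send c => c ∈ Cc
  | .recv c => c ∈ Cc
  | _ => False

/-- Actions whose label is kept unchanged by restriction to channel sets Cb, Cc. -/
def Act.keptBy (Cb : Set BCh) (Cc : Set CCh) : Act BCh CCh → Prop
  | .bsend d => d ∉ Cb
  | .brecv d => d ∉ Cb
  | .send c => c ∉ Cc
  | .recv c => c ∉ Cc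
  | _ => True

/-! ### Timed transition systems with broadcast actions -/

/-- The data of a TTSB: external/internal variables, states, initial state and
committed (`true`) / uncommitted (`false`) transition relations. -/
structure PreTTSB (Var Data BCh CCh : Type) : Type where
  E : Set Var
  H : Set Var
  S : Set (Valn Var Data)
  init : Valn Var Data
  Tr : Bool → Valn Var Data → Act BCh CCh → Valn Var Data → Prop

/-- The variables of a TTSB. -/
def PreTTSB.V (T : PreTTSB Var Data BCh CCh) : Set Var := T.E ∪ T.H

/-- A state is committed iff some committed transition starts in it. -/
def PreTTSB.Comm (T : PreTTSB Var Data BCh CCh) (s : Valn Var Data) : Prop :=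
  ∃ a t, T.Tr true s a t

/-- `T` is a timed transition system with broadcast actions (with clock set `X`):
well-formedness plus Axioms I–VI of the paper. -/
structure IsTTSB (X : Set Var) (T : PreTTSB Var Data BCh CCh) : Prop where
  disjEH : Disjoint T.E T.H
  statesDom : ∀ s ∈ T.S, dom s = T.V
  initMem : T.init ∈ T.S
  trMem : ∀ {b s a t}, T.Tr b s a t → s ∈ T.S ∧ t ∈ T.S
  trDisj : ∀ s a t, ¬ (T.Tr true s a t ∧ T.Tr false s a t)
  axI : ∀ {s a t b a' t'}, T.Tr true s a t → T.Tr b s a' t' →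
      a'.isSync ∨ (a' = Act.tau ∧ b = true)
  axII : ∀ {s} (u : Valn Var Data), s ∈ T.S → dom u = T.E → updV s u ∈ T.S
  axIIIc : ∀ {b s t} (u : Valn Var Data) (c : CCh), dom u = T.E →
      T.Tr b s (Act.recv c) t → ∃ t', T.Tr b (updV s u) (Act.recv c) t'
  axIIIb : ∀ {b s t} (u : Valn Var Data) (d : BCh), dom u = T.E →
      T.Tr b s (Act.brecv d) t → ∃ t', T.Tr b (updV s u) (Act.brecv d) t'
  axIV : ∀ {s d t}, T.Tr false s (Act.delay d) t → t = oplus X s d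
  axV : ∀ (d : BCh), ∀ s ∈ T.S, ∃ b t, T.Tr b s (Act.brecv d) t
  axVI : ∀ {b s t} (d : BCh), T.Tr b s (Act.brecv d) t →
      restrictV s T.E = restrictV t T.E

/-- Compatibility of two TTSBs. -/
def Compatible (T1 T2 : PreTTSB Var Data BCh CCh) : Prop :=
  T1.H ∩ T2.V = ∅ ∧ T2.H ∩ T1.V = ∅ ∧ compatV T1.init T2.init

/-- Comparability of two TTSBs. -/
def Comparable (T1 T2 : PreTTSB Var Data BCh CCh) : Prop := T1.E = T2.E

/-- The transition relations of the parallel composition of two TTSBs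
(rules EXT, TAU, SYNC, TIME, SND, RCV of the paper, in both directions). -/
inductive ParTr (T1 T2 : PreTTSB Var Data BCh CCh) :
    Bool → Valn Var Data → Act BCh CCh → Valn Var Data → Prop where
  | ext₁ {r s r' : Valn Var Data} {a : Act BCh CCh} {b : Bool}
      (hr : r ∈ T1.S) (hs : s ∈ T2.S) (hc : compatV r s)
      (ha : a.isBinary) (ht : T1.Tr b r a r') :
      ParTr T1 T2 b (override r s) a (override r' s)
  | ext₂ {r s s' : Valn Var Data} {a : Act BCh CCh} {b : Bool}
      (hr : r ∈ T1.S) (hs : s ∈ T2.S) (hc : compatV r s)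
      (ha : a.isBinary) (ht : T2.Tr b s a s') :
      ParTr T1 T2 b (override r s) a (override s' r)
  | tau₁ {r s r' : Valn Var Data} {b : Bool}
      (hr : r ∈ T1.S) (hs : s ∈ T2.S) (hc : compatV r s)
      (ht : T1.Tr b r Act.tau r') (hcm : T2.Comm s → b = true) :
      ParTr T1 T2 b (override r s) Act.tau (override r' s)
  | tau₂ {r s s' : Valn Var Data} {b : Bool}
      (hr : r ∈ T1.S) (hs : s ∈ T2.S) (hc : compatV r s)
      (ht : T2.Tr b s Act.tau s') (hcm : T1.Comm r → b = true) :
      ParTr T1 T2 b (override r s) Act.tau (override s' r)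
  | sync₁ {r s r' s' : Valn Var Data} {c : CCh} {b b' : Bool}
      (hr : r ∈ T1.S) (hs : s ∈ T2.S) (hc : compatV r s)
      (ht1 : T1.Tr b r (Act.send c) r') (ht2 : T2.Tr b' (updV s r') (Act.recv c) s')
      (hcm : (T1.Comm r ∨ T2.Comm s) → (b || b') = true) :
      ParTr T1 T2 (b || b') (override r s) Act.tau (override s' r')
  | sync₂ {r s r' s' : Valn Var Data} {c : CCh} {b b' : Bool}
      (hr : r ∈ T1.S) (hs : s ∈ T2.S) (hc : compatV r s)
      (ht1 : T2.Tr b s (Act.send c) s') (ht2 : T1.Tr b' (updV r s') (Act.recv c) r')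
      (hcm : (T2.Comm s ∨ T1.Comm r) → (b || b') = true) :
      ParTr T1 T2 (b || b') (override r s) Act.tau (override r' s')
  | time₁ {r s r' s' : Valn Var Data} {d : NNReal}
      (hr : r ∈ T1.S) (hs : s ∈ T2.S) (hc : compatV r s)
      (ht1 : T1.Tr false r (Act.delay d) r') (ht2 : T2.Tr false s (Act.delay d) s') :
      ParTr T1 T2 false (override r s) (Act.delay d) (override r' s')
  | time₂ {r s r' s' : Valn Var Data} {d : NNReal}
      (hr : r ∈ T1.S) (hs : s ∈ T2.S) (hc : compatV r s)
      (ht1 : T2.Tr false s (Act.delay d) s') (ht2 : T1.Tr false r (Act.delay d) r') :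
      ParTr T1 T2 false (override r s) (Act.delay d) (override s' r')
  | snd₁ {r s r' s' : Valn Var Data} {δ : BCh} {b b' : Bool}
      (hr : r ∈ T1.S) (hs : s ∈ T2.S) (hc : compatV r s)
      (ht1 : T1.Tr b r (Act.bsend δ) r') (ht2 : T2.Tr b' (updV s r') (Act.brecv δ) s') :
      ParTr T1 T2 (b || b') (override r s) (Act.bsend δ) (override r' s')
  | snd₂ {r s r' s' : Valn Var Data} {δ : BCh} {b b' : Bool}
      (hr : r ∈ T1.S) (hs : s ∈ T2.S) (hc : compatV r s)
      (ht1 : T2.Tr b s (Act.bsend δ) s') (ht2 : T1.Tr b' (updV r s') (Act.brecv δ) r') :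
      ParTr T1 T2 (b || b') (override r s) (Act.bsend δ) (override s' r')
  | rcv₁ {r s r' s' : Valn Var Data} {δ : BCh} {b b' : Bool}
      (hr : r ∈ T1.S) (hs : s ∈ T2.S) (hc : compatV r s)
      (ht1 : T1.Tr b r (Act.brecv δ) r') (ht2 : T2.Tr b' s (Act.brecv δ) s') :
      ParTr T1 T2 (b || b') (override r s) (Act.brecv δ) (override r' s')
  | rcv₂ {r s r' s' : Valn Var Data} {δ : BCh} {b b' : Bool}
      (hr : r ∈ T1.S) (hs : s ∈ T2.S) (hc : compatV r s)
      (ht1 : T2.Tr b s (Act.brecv δ) s') (ht2 : T1.Tr b' r (Act.brecv δ) r') :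
      ParTr T1 T2 (b || b') (override r s) (Act.brecv δ) (override s' r')

/-- Parallel composition of TTSBs. -/
def par (T1 T2 : PreTTSB Var Data BCh CCh) : PreTTSB Var Data BCh CCh where
  E := T1.E ∪ T2.E
  H := T1.H ∪ T2.H
  S := {v | ∃ r ∈ T1.S, ∃ s ∈ T2.S, compatV r s ∧ v = override r s}
  init := override T1.init T2.init
  Tr := ParTr T1 T2

/-- n-ary (left-associated) parallel composition. -/
def parAll (T : PreTTSB Var Data BCh CCh) (Ts : List (PreTTSB Var Data BCh CCh)) :
    PreTTSB Var Data BCh CCh :=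
  Ts.foldl par T

/-- The restriction operator on TTSBs: channels in Cb/Cc and external variables in Ce
are internalized, following Definition 10 of the paper. -/
def restr (T : PreTTSB Var Data BCh CCh) (Cb : Set BCh) (Cc : Set CCh) (Ce : Set Var) :
    PreTTSB Var Data BCh CCh where
  E := T.E \ Ce
  H := T.H ∪ (T.E ∩ Ce)
  S := T.S
  init := T.init
  Tr := fun b s a t =>
    (T.Tr b s a t ∧ Act.keptBy Cb Cc a) ∨
    (a = Act.tau ∧ ∃ δ ∈ Cb, T.Tr b s (Act.bsend δ) t ∧ (T.Comm s → b = true))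

/-- Broadcast channels enabled in the transitions of T. -/
def enabledB (T : PreTTSB Var Data BCh CCh) : Set BCh :=
  {δ | ∃ b s t, T.Tr b s (Act.bsend δ) t ∨ T.Tr b s (Act.brecv δ) t}

/-- Binary channels enabled in the transitions of T. -/
def enabledC (T : PreTTSB Var Data BCh CCh) : Set CCh :=
  {c | ∃ b s t, T.Tr b s (Act.send c) t ∨ T.Tr b s (Act.recv c) t}

/-! ### Timed step simulation -/

/-- R is a timed step simulation from T1 to T2 (Definition 11 of the paper). -/
structure IsTimedStepSim (T1 T2 : PreTTSB Var Data BCh CCh)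
    (R : Valn Var Data → Valn Var Data → Prop) : Prop where
  mem : ∀ {r s}, R r s → r ∈ T1.S ∧ s ∈ T2.S
  initR : R T1.init T2.init
  extEq : ∀ {r s}, R r s → restrictV r T1.E = restrictV s T2.E
  updR : ∀ {r s} (u : Valn Var Data), R r s → dom u = T1.E → R (updV r u) (updV s u)
  commR : ∀ {r s}, R r s → T2.Comm s → T1.Comm r
  stepR : ∀ {r s b a r'}, R r s → T1.Tr b r a r' →
      (∃ s', T2.Tr b s a s' ∧ R r' s') ∨ (a = Act.tau ∧ R r' s)

/-- T1 ≼ T2 : some timed step simulation from T1 to T2 exists. -/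
def simLE (T1 T2 : PreTTSB Var Data BCh CCh) : Prop :=
  ∃ R, IsTimedStepSim T1 T2 R

/-! ### Timed automata -/

/-- Edge labels of timed automata (actions without time passage). -/
inductive ELab (BCh CCh : Type) : Type where
  | bsend : BCh → ELab BCh CCh
  | brecv : BCh → ELab BCh CCh
  | send : CCh → ELab BCh CCh
  | recv : CCh → ELab BCh CCh
  | tau : ELab BCh CCh

/-- Edge labels as actions. -/
def ELab.toAct : ELab BCh CCh → Act BCh CCh
  | .bsend δ => .bsend δ
  | .brecv δ => .brecv δ
  | .send c => .send c
  | .recv c => .recv c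
  | .tau => .tau

/-- A timed automaton: locations (a set of data values), committed locations, initial
location, external/internal variables, initial valuation, invariants, transitions
(location, guard, action, update function, location) and urgent transitions. -/
structure TA (Var Data BCh CCh : Type) : Type where
  L : Set Data
  K : Set Data
  l0 : Data
  E : Set Var
  H : Set Var
  v0 : Valn Var Data
  Inv : Data → Set (Valn Var Data)
  Tr : Data → Set (Valn Var Data) → ELab BCh CCh →
      (Valn Var Data → Valn Var Data) → Data → Prop
  UTr : Data → Set (Valn Var Data) → ELab BCh CCh →
      (Valn Var Data → Valn Var Data) → Data → Prop

/-- The variables of a timed automaton. -/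
def TA.V (A : TA Var Data BCh CCh) : Set Var := A.E ∪ A.H

/-- Well-formedness of a timed automaton, together with Axioms VII–XI of the paper
(clock set X). -/
structure TAok (X : Set Var) (A : TA Var Data BCh CCh) : Prop where
  disjEH : Disjoint A.E A.H
  l0mem : A.l0 ∈ A.L
  Ksub : A.K ⊆ A.L
  v0dom : dom A.v0 = A.V
  v0inv : restrictV A.v0 A.V ∈ A.Inv A.l0
  invLC : ∀ l, leftClosed X (A.Inv l)
  urgSub : ∀ {l g a ρ l'}, A.UTr l g a ρ l' → A.Tr l g a ρ l'
  trLoc : ∀ {l g a ρ l'}, A.Tr l g a ρ l' → l ∈ A.L ∧ l' ∈ A.L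
  updDom : ∀ {l g a ρ l'}, A.Tr l g a ρ l' → ∀ v, dom v = A.V → dom (ρ v) = A.V
  axVII : ∀ l, indep A.V A.E (A.Inv l)
  axVIIIc : ∀ {l g ρ l'} (c : CCh), A.Tr l g (ELab.recv c) ρ l' → indep A.V A.E g
  axVIIIb : ∀ {l g ρ l'} (δ : BCh), A.Tr l g (ELab.brecv δ) ρ l' → indep A.V A.E g
  axIX : ∀ {l}, l ∈ A.K → ∀ v, dom v = A.V → v ∈ A.Inv l →
      ∃ g a ρ l', A.Tr l g a ρ l' ∧ v ∈ g ∧ ρ v ∈ A.Inv l'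
  axX : ∀ {l g a ρ l'}, A.UTr l g a ρ l' → a = ELab.tau ∧ indep A.V (A.V ∩ X) g
  axXI : ∀ {l g ρ l'} (δ : BCh), A.Tr l g (ELab.brecv δ) ρ l' →
      ∀ v, restrictV (ρ v) A.E = restrictV v A.E

/-- States of the TTSB associated to a TA with location variable ℓ. -/
def taState (A : TA Var Data BCh CCh) (ℓ : Var) : Set (Valn Var Data) :=
  {v | dom v = A.V ∪ {ℓ} ∧
    ∃ l ∈ A.L, v ℓ = some (Sum.inr l) ∧ restrictV v A.V ∈ A.Inv l}

/-- Application of an update function ρ : Val(V) → Val(V) to a larger state. -/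
def applyU (A : TA Var Data BCh CCh) (ρ : Valn Var Data → Valn Var Data)
    (s : Valn Var Data) : Valn Var Data :=
  updV s (ρ (restrictV s A.V))

/-- The transition relations of the TTSB associated to a TA
(rules ACT, TIME and VIRT of the paper). -/
inductive TATrans (X : Set Var) (A : TA Var Data BCh CCh) (ℓ : Var) :
    Bool → Valn Var Data → Act BCh CCh → Valn Var Data → Prop where
  | act {s : Valn Var Data} {l : Data} {g : Set (Valn Var Data)} {a : ELab BCh CCh}
      {ρ : Valn Var Data → Valn Var Data} {l' : Data} {b : Bool}
      (hs : s ∈ taState A ℓ) (hl : s ℓ = some (Sum.inr l))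
      (ht : A.Tr l g a ρ l') (hg : restrictV s A.V ∈ g)
      (hb : b = true ↔ l ∈ A.K)
      (hs' : updV (applyU A ρ s) (single ℓ (Sum.inr l')) ∈ taState A ℓ) :
      TATrans X A ℓ b s a.toAct (updV (applyU A ρ s) (single ℓ (Sum.inr l')))
  | time {s : Valn Var Data} {l : Data} {d : NNReal}
      (hs : s ∈ taState A ℓ) (hl : s ℓ = some (Sum.inr l)) (hK : l ∉ A.K)
      (hs' : oplus X s d ∈ taState A ℓ)
      (hurg : ∀ d' : NNReal, d' ≤ d → ∀ g ρ l', A.UTr l g ELab.tau ρ l' →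
          restrictV (oplus X s d') A.V ∉ g) :
      TATrans X A ℓ false s (Act.delay d) (oplus X s d)
  | virt {s : Valn Var Data} {l : Data} (δ : BCh)
      (hs : s ∈ taState A ℓ) (hl : s ℓ = some (Sum.inr l))
      (hno : ∀ g ρ l', A.Tr l g (ELab.brecv δ) ρ l' → restrictV s A.V ∉ g) :
      TATrans X A ℓ false s (Act.brecv δ) s

/-- The TTSB associated to a timed automaton. -/
def TTSBof (X : Set Var) (A : TA Var Data BCh CCh) (ℓ : Var) :
    PreTTSB Var Data BCh CCh where
  E := A.E
  H := A.H ∪ {ℓ}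
  S := taState A ℓ
  init := override A.v0 (single ℓ (Sum.inr A.l0))
  Tr := TATrans X A ℓ

/-! ### Networks of timed automata and their non-compositional semantics -/

/-- A network component: a timed automaton together with its (fresh) location variable. -/
abbrev Comp (Var Data BCh CCh : Type) : Type := TA Var Data BCh CCh × Var

/-- The variables of a component, including its location variable. -/
def compW (c : Comp Var Data BCh CCh) : Set Var := c.1.V ∪ {c.2}

/-- The TTSB associated to a component. -/
def TTSBofC (X : Set Var) (c : Comp Var Data BCh CCh) : PreTTSB Var Data BCh CCh :=
  TTSBof X c.1 c.2

/-- All variables of a network. -/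
def NTAvars (N : List (Comp Var Data BCh CCh)) : Set Var :=
  {x | ∃ c ∈ N, x ∈ compW c}

/-- The states of the non-compositional (UPPAAL) semantics of a network. -/
def NTAstates (N : List (Comp Var Data BCh CCh)) : Set (Valn Var Data) :=
  {v | dom v = NTAvars N ∧
    ∀ c ∈ N, ∃ l ∈ c.1.L, v c.2 = some (Sum.inr l) ∧ restrictV v c.1.V ∈ c.1.Inv l}

/-- The initial state of the non-compositional semantics of a network. -/
def NTAinit (N : List (Comp Var Data BCh CCh)) : Valn Var Data :=
  N.foldr (fun c w => override (override c.1.v0 (single c.2 (Sum.inr c.1.l0))) w)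
    (fun _ => none)

/-- A component is in a committed location at state s. -/
def atCommitted (c : Comp Var Data BCh CCh) (s : Valn Var Data) : Prop :=
  ∃ l ∈ c.1.K, s c.2 = some (Sum.inr l)

/-- No component of the network is in a committed location. -/
def noneCommitted (N : List (Comp Var Data BCh CCh)) (s : Valn Var Data) : Prop :=
  ∀ c ∈ N, ¬ atCommitted c s

/-- Application of a component update function to a network state. -/
def applyC (c : Comp Var Data BCh CCh) (ρ : Valn Var Data → Valn Var Data)
    (s : Valn Var Data) : Valn Var Data :=
  updV s (ρ (restrictV s c.1.V))

/-- j ∈ RS(δ, i, s): component j (≠ i) has an executable δ?-transition in s. -/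
def RSmem (N : List (Comp Var Data BCh CCh)) (δ : BCh) (i : ℕ) (s : Valn Var Data)
    (j : ℕ) : Prop :=
  j ≠ i ∧ ∃ (hj : j < N.length), ∃ l g ρ l',
    s (N.get ⟨j, hj⟩).2 = some (Sum.inr l) ∧
    (N.get ⟨j, hj⟩).1.Tr l g (ELab.brecv δ) ρ l' ∧
    restrictV s (N.get ⟨j, hj⟩).1.V ∈ g

/-- Apply the chosen receiver updates in index order (left-to-right). -/
def bcastUpds (N : List (Comp Var Data BCh CCh)) (δ : BCh) (i : ℕ) (s0 : Valn Var Data)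
    (ρs : ℕ → Valn Var Data → Valn Var Data) (v : Valn Var Data) : Valn Var Data :=
  (List.range N.length).foldl
    (fun w j =>
      if hj : j < N.length then
        if RSmem N δ i s0 j then applyC (N.get ⟨j, hj⟩) (ρs j) w else w
      else w) v

/-- Update the location variables of all receivers. -/
def bcastLocs (N : List (Comp Var Data BCh CCh)) (δ : BCh) (i : ℕ) (s0 : Valn Var Data)
    (ls' : ℕ → Data) (v : Valn Var Data) : Valn Var Data :=
  (List.range N.length).foldl
    (fun w j =>
      if hj : j < N.length then
        if RSmem N δ i s0 j then
          updV w (single (N.get ⟨j, hj⟩).2 (Sum.inr (ls' j)))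
        else w
      else w) v

/-- The non-compositional (UPPAAL) transition relation of a network
(rules TAU, SYNC, TIME and BCST of the paper). -/
inductive NTATr (X : Set Var) (N : List (Comp Var Data BCh CCh)) :
    Valn Var Data → Act BCh CCh → Valn Var Data → Prop where
  | tau {s : Valn Var Data} {i : ℕ} (hi : i < N.length)
      {l : Data} {g : Set (Valn Var Data)} {ρ : Valn Var Data → Valn Var Data} {l' : Data}
      (hs : s ∈ NTAstates N)
      (hl : s (N.get ⟨i, hi⟩).2 = some (Sum.inr l))
      (ht : (N.get ⟨i, hi⟩).1.Tr l g ELab.tau ρ l')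
      (hg : restrictV s (N.get ⟨i, hi⟩).1.V ∈ g)
      (hcomm : noneCommitted N s ∨ l ∈ (N.get ⟨i, hi⟩).1.K)
      (hs' : updV (applyC (N.get ⟨i, hi⟩) ρ s)
          (single (N.get ⟨i, hi⟩).2 (Sum.inr l')) ∈ NTAstates N) :
      NTATr X N s Act.tau
        (updV (applyC (N.get ⟨i, hi⟩) ρ s) (single (N.get ⟨i, hi⟩).2 (Sum.inr l')))
  | sync {s : Valn Var Data} {i j : ℕ} (hi : i < N.length) (hj : j < N.length)
      (hij : i ≠ j) {li lj li' lj' : Data} {gi gj : Set (Valn Var Data)}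
      {ρi ρj : Valn Var Data → Valn Var Data} {c : CCh}
      (hs : s ∈ NTAstates N)
      (hli : s (N.get ⟨i, hi⟩).2 = some (Sum.inr li))
      (hlj : s (N.get ⟨j, hj⟩).2 = some (Sum.inr lj))
      (hti : (N.get ⟨i, hi⟩).1.Tr li gi (ELab.send c) ρi li')
      (htj : (N.get ⟨j, hj⟩).1.Tr lj gj (ELab.recv c) ρj lj')
      (hgi : restrictV s (N.get ⟨i, hi⟩).1.V ∈ gi)
      (hgj : restrictV s (N.get ⟨j, hj⟩).1.V ∈ gj)
      (hcomm : noneCommitted N s ∨ li ∈ (N.get ⟨i, hi⟩).1.K ∨ lj ∈ (N.get ⟨j, hj⟩).1.K)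
      (hs' : updV (updV (applyC (N.get ⟨j, hj⟩) ρj (applyC (N.get ⟨i, hi⟩) ρi s))
          (single (N.get ⟨i, hi⟩).2 (Sum.inr li')))
          (single (N.get ⟨j, hj⟩).2 (Sum.inr lj')) ∈ NTAstates N) :
      NTATr X N s Act.tau
        (updV (updV (applyC (N.get ⟨j, hj⟩) ρj (applyC (N.get ⟨i, hi⟩) ρi s))
          (single (N.get ⟨i, hi⟩).2 (Sum.inr li')))
          (single (N.get ⟨j, hj⟩).2 (Sum.inr lj')))
  | time {s : Valn Var Data} {d : NNReal}
      (hs : s ∈ NTAstates N) (hs' : oplus X s d ∈ NTAstates N)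
      (hK : noneCommitted N s)
      (hurg : ¬ ∃ (i : ℕ) (hi : i < N.length), ∃ l g ρ l',
          (N.get ⟨i, hi⟩).1.UTr l g ELab.tau ρ l' ∧
          s (N.get ⟨i, hi⟩).2 = some (Sum.inr l) ∧
          restrictV s (N.get ⟨i, hi⟩).1.V ∈ g) :
      NTATr X N s (Act.delay d) (oplus X s d)
  | bcst {s : Valn Var Data} {i : ℕ} (hi : i < N.length)
      {l l' : Data} {g : Set (Valn Var Data)} {ρ : Valn Var Data → Valn Var Data}
      {δ : BCh} (ρs : ℕ → Valn Var Data → Valn Var Data) (ls' : ℕ → Data)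
      (hs : s ∈ NTAstates N)
      (hl : s (N.get ⟨i, hi⟩).2 = some (Sum.inr l))
      (ht : (N.get ⟨i, hi⟩).1.Tr l g (ELab.bsend δ) ρ l')
      (hg : restrictV s (N.get ⟨i, hi⟩).1.V ∈ g)
      (hrecv : ∀ j (hj : j < N.length), RSmem N δ i s j →
          ∃ lj gj, s (N.get ⟨j, hj⟩).2 = some (Sum.inr lj) ∧
            (N.get ⟨j, hj⟩).1.Tr lj gj (ELab.brecv δ) (ρs j) (ls' j) ∧
            restrictV s (N.get ⟨j, hj⟩).1.V ∈ gj)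
      (hcomm : noneCommitted N s ∨ l ∈ (N.get ⟨i, hi⟩).1.K ∨
          ∃ j, ∃ (hj : j < N.length), RSmem N δ i s j ∧
            ∃ lj ∈ (N.get ⟨j, hj⟩).1.K, s (N.get ⟨j, hj⟩).2 = some (Sum.inr lj))
      (hs' : bcastLocs N δ i s ls'
          (updV (bcastUpds N δ i s ρs (applyC (N.get ⟨i, hi⟩) ρ s))
            (single (N.get ⟨i, hi⟩).2 (Sum.inr l'))) ∈ NTAstates N) :
      NTATr X N s Act.tau
        (bcastLocs N δ i s ls'
          (updV (bcastUpds N δ i s ρs (applyC (N.get ⟨i, hi⟩) ρ s))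
            (single (N.get ⟨i, hi⟩).2 (Sum.inr l'))))

/-- Well-formedness of a network: components satisfy Axioms VII–XI, are pairwise
compatible, and the location variables are fresh and pairwise distinct. -/
def NTAok (X : Set Var) (N : List (Comp Var Data BCh CCh)) : Prop :=
  (∀ c ∈ N, TAok X c.1) ∧
  N.Pairwise (fun c c' => c.1.H ∩ c'.1.V = ∅ ∧ c'.1.H ∩ c.1.V = ∅ ∧
    compatV c.1.v0 c'.1.v0) ∧
  (∀ c ∈ N, ∀ c' ∈ N, c.2 ∉ c'.1.V) ∧
  N.Pairwise (fun c c' => c.2 ≠ c'.2)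

/-- Reachability in the non-compositional semantics of a network. -/
def Reach (X : Set Var) (N : List (Comp Var Data BCh CCh)) (s : Valn Var Data) : Prop :=
  Relation.ReflTransGen (fun u v => ∃ a, NTATr X N u a v) (NTAinit N) s


/-!
If `R` is a timed step simulation from `T1` to `T2`, then relating `r ‖ t` to `s ‖ t`
whenever `R r s` gives one from `T1 ‖ T3` to `T2 ‖ T3`. Component states have fixed domains,
so a state of a composition determines its components, and a step of `r ‖ t` is a step of
`r`, of `t`, or of both; the steps of `r` are matched through `R`. The point is that `r` and
`s` agree on the external variables, which are all that `T3` can see: hence `t[r] = t[s]`,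
and updating `r` and `s` by a state of `T3` is an external update, which `R` preserves.
Commitment is handled by `Comm (r ‖ t) ↔ Comm r ∨ Comm t`, which needs Axioms III and V:
a committed receive of `t[r]` is one of `t` as well, and a committed send always finds a
receiver.
-/

section Valuation

variable {α β : Type*} {f g u r t r₀ t₀ : α → Option β} {E D : Set α}

theorem override_apply (f g : α → Option β) (x : α) :
    override f g x = if f x = none then g x else f x := by
  by_cases h : f x = none <;> simp [override, dom, h]

theorem updV_apply (f g : α → Option β) (x : α) :
    updV f g x = if f x = none then none else if g x = none then f x else g x := by
  by_cases h : f x = none <;> simp [updV, restrictV, override_apply, dom, h]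

theorem compatV.symm (h : compatV f g) : compatV g f :=
  fun x hx => (h x ⟨hx.2, hx.1⟩).symm

theorem override_comm (h : compatV f g) : override f g = override g f := by
  funext x
  simp only [override_apply]
  by_cases hf : f x = none <;> by_cases hg : g x = none <;> simp [hf, hg]
  exact h x ⟨hf, hg⟩

theorem compatV_updV (f g : α → Option β) : compatV f (updV g f) := by
  rintro x ⟨hf, hg⟩
  have hf' : f x ≠ none := hf
  have hg' : g x ≠ none := fun h => hg (by simp [updV_apply, h])
  simp [updV_apply, hg', hf']

theorem override_updV (f g : α → Option β) : override f (updV g f) = override f g := by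
  funext x
  simp only [override_apply, updV_apply]
  split_ifs <;> simp_all

theorem override_eq_override_updV (f g : α → Option β) : override f g = override (updV g f) f :=
  (override_updV f g).symm.trans (override_comm (compatV_updV f g))

theorem override_inj (hr : dom r₀ = dom r) (ht : dom t₀ = dom t) (hc₀ : compatV r₀ t₀)
    (hc : compatV r t) (h : override r₀ t₀ = override r t) : r₀ = r ∧ t₀ = t := by
  have hr' (x) : r₀ x = none ↔ r x = none := not_iff_not.mp (Set.ext_iff.mp hr x)
  have ht' (x) : t₀ x = none ↔ t x = none := not_iff_not.mp (Set.ext_iff.mp ht x)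
  have hr₀ : r₀ = r := by
    funext x
    have hx := congrFun h x
    simp only [override_apply, hr' x] at hx
    by_cases hx' : r x = none
    · rw [hx', (hr' x).mpr hx']
    · simpa [hx'] using hx
  refine ⟨hr₀, funext fun x => ?_⟩
  subst hr₀
  have hx := congrFun h x
  simp only [override_apply] at hx
  by_cases hx₀ : t₀ x = none
  · rw [hx₀, (ht' x).mp hx₀]
  by_cases hxr : r₀ x = none
  · simpa [hxr] using hx
  · rw [← hc₀ x ⟨hxr, hx₀⟩, hc x ⟨hxr, mt (ht' x).mpr hx₀⟩]

theorem dom_override (f g : α → Option β) : dom (override f g) = dom f ∪ dom g := by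
  ext x
  by_cases hf : f x = none <;> simp [dom, override_apply, hf]

theorem updV_override (f g u : α → Option β) :
    updV (override f g) u = override (updV f u) (updV g u) := by
  funext x
  simp only [override_apply, updV_apply]
  split_ifs <;> simp_all

theorem compatV.updV (h : compatV f g) (u : α → Option β) : compatV (updV f u) (updV g u) := by
  rintro x ⟨hf, hg⟩
  have hf' : f x ≠ none := fun h' => hf (by simp [updV_apply, h'])
  have hg' : g x ≠ none := fun h' => hg (by simp [updV_apply, h'])
  by_cases hu : u x = none <;> simp [updV_apply, hg', hu, h x ⟨hf', hg'⟩]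

theorem restrictV_eq_iff_eqOn : restrictV f E = restrictV g E ↔ Set.EqOn f g E := by
  refine ⟨fun h x hx => by simpa [restrictV, hx] using congrFun h x,
    fun h => funext fun x => ?_⟩
  by_cases hx : x ∈ E
  · simp [restrictV, hx, h hx]
  · simp [restrictV, hx]

theorem eqOn_of_dom_inter_subset (h : Set.EqOn f g E) (hf : dom f ∩ D ⊆ E)
    (hg : dom g ∩ D ⊆ E) : Set.EqOn f g D := by
  intro x hx
  by_cases hxE : x ∈ E
  · exact h hxE
  · have hfx : f x = none := by_contra fun h' => hxE (hf ⟨h', hx⟩)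
    have hgx : g x = none := by_contra fun h' => hxE (hg ⟨h', hx⟩)
    rw [hfx, hgx]

theorem eqOn_override_left (h : Set.EqOn f g D) (u : α → Option β) :
    Set.EqOn (override f u) (override g u) D := fun x hx => by
  simp only [override_apply, h hx]

theorem eqOn_override_right (h : Set.EqOn f g D) (u : α → Option β) :
    Set.EqOn (override u f) (override u g) D := fun x hx => by
  simp only [override_apply, h hx]

theorem updV_congr (h : Set.EqOn g u (dom f)) : updV f g = updV f u := by
  funext x
  by_cases hx : f x = none
  · simp [updV_apply, hx]
  · simp [updV_apply, hx, h hx]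

theorem dom_restrictV (h : E ⊆ dom f) : dom (restrictV f E) = E := by
  ext x
  by_cases hx : x ∈ E
  · simpa [dom, restrictV, hx] using h hx
  · simp [dom, restrictV, hx]

theorem updV_eq_updV_restrictV (h : dom f ∩ dom u ⊆ E) :
    updV f u = updV f (restrictV (override u f) E) := by
  funext x
  by_cases hx : x ∈ E
  · simp only [updV_apply, restrictV, hx, if_true, override_apply]
    split_ifs <;> simp_all
  · have : f x = none ∨ u x = none := by
      by_contra! h'
      exact hx (h ⟨h'.1, h'.2⟩)
    rcases this with h' | h' <;> simp [updV_apply, restrictV, hx, h']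

theorem updV_updV_restrictV (h : dom f ∩ dom g ⊆ E) :
    updV (updV f g) (restrictV f E) = f := by
  funext x
  by_cases hx : x ∈ E
  · simp only [updV_apply, restrictV, hx, if_true]
    split_ifs <;> simp_all
  · have : f x = none ∨ g x = none := by
      by_contra! h'
      exact hx (h ⟨h'.1, h'.2⟩)
    rcases this with h' | h' <;> simp only [updV_apply, restrictV, hx, h', if_false] <;>
      split_ifs <;> simp_all

end Valuation

section Composition

variable {X : Set Var} {A B : PreTTSB Var Data BCh CCh} {r r₀ s t t₀ u : Valn Var Data}
  {D : Set Var}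

theorem IsTTSB.E_subset_dom (hA : IsTTSB X A) (hr : r ∈ A.S) : A.E ⊆ dom r :=
  (hA.statesDom r hr).symm ▸ Set.subset_union_left

theorem IsTTSB.dom_inter_subset (hA : IsTTSB X A) (hr : r ∈ A.S) (hD : Disjoint A.H D) :
    dom r ∩ D ⊆ A.E := by
  rintro x ⟨hx, hxD⟩
  rw [hA.statesDom r hr] at hx
  exact hx.resolve_right fun hH => Set.disjoint_left.mp hD hH hxD

theorem IsTTSB.updV_mem (hA : IsTTSB X A) (hr : r ∈ A.S) (hu : Disjoint A.H (dom u)) :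
    updV r u ∈ A.S := by
  rw [updV_eq_updV_restrictV (hA.dom_inter_subset hr hu)]
  exact hA.axII _ hr (dom_restrictV (dom_override u r ▸
    Set.subset_union_of_subset_right (hA.E_subset_dom hr) _))

theorem IsTTSB.not_tr_true_delay (hA : IsTTSB X A) {d : NNReal} :
    ¬ A.Tr true r (.delay d) s := fun h => by
  rcases hA.axI h h with h' | ⟨h', -⟩ <;> cases h'

theorem IsTTSB.comm_of_recv_updV (hA : IsTTSB X A) (hr : r ∈ A.S) (hu : Disjoint A.H (dom u))
    {c : CCh} (h : A.Tr true (updV r u) (.recv c) s) : A.Comm r := by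
  obtain ⟨s', hs'⟩ := hA.axIIIc _ c (dom_restrictV (hA.E_subset_dom hr)) h
  rw [updV_updV_restrictV (hA.dom_inter_subset hr hu)] at hs'
  exact ⟨_, _, hs'⟩

theorem IsTTSB.comm_of_brecv_updV (hA : IsTTSB X A) (hr : r ∈ A.S) (hu : Disjoint A.H (dom u))
    {δ : BCh} (h : A.Tr true (updV r u) (.brecv δ) s) : A.Comm r := by
  obtain ⟨s', hs'⟩ := hA.axIIIb _ δ (dom_restrictV (hA.E_subset_dom hr)) h
  rw [updV_updV_restrictV (hA.dom_inter_subset hr hu)] at hs'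
  exact ⟨_, _, hs'⟩

theorem Compatible.symm (h : Compatible A B) : Compatible B A :=
  ⟨h.2.1, h.1, h.2.2.symm⟩

theorem Compatible.disjoint_H_V (h : Compatible A B) : Disjoint A.H B.V :=
  Set.disjoint_iff_inter_eq_empty.mpr h.1

theorem Compatible.disjoint_H_dom (h : Compatible A B) (hB : IsTTSB X B) (ht : t ∈ B.S) :
    Disjoint A.H (dom t) :=
  hB.statesDom t ht ▸ h.disjoint_H_V

theorem override_inj_of_mem (hA : IsTTSB X A) (hB : IsTTSB X B) (hr : r ∈ A.S) (ht : t ∈ B.S)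
    (hr₀ : r₀ ∈ A.S) (ht₀ : t₀ ∈ B.S) (hc : compatV r t) (hc₀ : compatV r₀ t₀)
    (h : override r t = override r₀ t₀) : r = r₀ ∧ t = t₀ :=
  override_inj (by rw [hA.statesDom r hr, hA.statesDom r₀ hr₀])
    (by rw [hB.statesDom t ht, hB.statesDom t₀ ht₀]) hc hc₀ h

theorem ParTr.swap {b : Bool} {v v' : Valn Var Data} {a : Act BCh CCh}
    (h : ParTr A B b v a v') : ParTr B A b v a v' := by
  cases h with
  | ext₁ hr hs hc ha ht => rw [override_comm hc]; exact .ext₂ hs hr hc.symm ha ht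
  | ext₂ hr hs hc ha ht => rw [override_comm hc]; exact .ext₁ hs hr hc.symm ha ht
  | tau₁ hr hs hc ht hcm => rw [override_comm hc]; exact .tau₂ hs hr hc.symm ht hcm
  | tau₂ hr hs hc ht hcm => rw [override_comm hc]; exact .tau₁ hs hr hc.symm ht hcm
  | sync₁ hr hs hc ht₁ ht₂ hcm =>
    rw [override_comm hc]; exact .sync₂ hs hr hc.symm ht₁ ht₂ hcm
  | sync₂ hr hs hc ht₁ ht₂ hcm =>
    rw [override_comm hc]; exact .sync₁ hs hr hc.symm ht₁ ht₂ hcm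
  | time₁ hr hs hc ht₁ ht₂ => rw [override_comm hc]; exact .time₂ hs hr hc.symm ht₁ ht₂
  | time₂ hr hs hc ht₁ ht₂ => rw [override_comm hc]; exact .time₁ hs hr hc.symm ht₁ ht₂
  | snd₁ hr hs hc ht₁ ht₂ => rw [override_comm hc]; exact .snd₂ hs hr hc.symm ht₁ ht₂
  | snd₂ hr hs hc ht₁ ht₂ => rw [override_comm hc]; exact .snd₁ hs hr hc.symm ht₁ ht₂
  | rcv₁ hr hs hc ht₁ ht₂ => rw [override_comm hc]; exact .rcv₂ hs hr hc.symm ht₁ ht₂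
  | rcv₂ hr hs hc ht₁ ht₂ => rw [override_comm hc]; exact .rcv₁ hs hr hc.symm ht₁ ht₂

theorem comm_par_of_comm_left (hA : IsTTSB X A) (hB : IsTTSB X B) (hAB : Compatible A B)
    (hr : r ∈ A.S) (ht : t ∈ B.S) (hc : compatV r t) (h : A.Comm r) :
    (par A B).Comm (override r t) := by
  obtain ⟨a, r', h⟩ := h
  cases a with
  | send c => exact ⟨_, _, .ext₁ (a := .send c) hr ht hc trivial h⟩
  | recv c => exact ⟨_, _, .ext₁ (a := .recv c) hr ht hc trivial h⟩
  | tau => exact ⟨_, _, .tau₁ hr ht hc h fun _ => rfl⟩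
  | delay d => exact absurd h hA.not_tr_true_delay
  | brecv δ =>
    obtain ⟨b, t', h'⟩ := hB.axV δ t ht
    exact ⟨_, _, .rcv₁ hr ht hc h h'⟩
  | bsend δ =>
    have hmem := hB.updV_mem ht (hAB.symm.disjoint_H_dom hA (hA.trMem h).2)
    obtain ⟨b, t', h'⟩ := hB.axV δ _ hmem
    exact ⟨_, _, .snd₁ hr ht hc h h'⟩

theorem comm_par_of_comm_right (hA : IsTTSB X A) (hB : IsTTSB X B) (hAB : Compatible A B)
    (hr : r ∈ A.S) (ht : t ∈ B.S) (hc : compatV r t) (h : B.Comm t) :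
    (par A B).Comm (override r t) := by
  obtain ⟨a, v', hv'⟩ := comm_par_of_comm_left hB hA hAB.symm ht hr hc.symm h
  rw [override_comm hc.symm] at hv'
  exact ⟨a, v', hv'.swap⟩

theorem comm_of_comm_par (hA : IsTTSB X A) (hB : IsTTSB X B) (hAB : Compatible A B)
    (hr : r ∈ A.S) (ht : t ∈ B.S) (hc : compatV r t) (h : (par A B).Comm (override r t)) :
    A.Comm r ∨ B.Comm t := by
  obtain ⟨a, v', h⟩ := h
  generalize hb : true = b at h
  generalize hv : override r t = v at h
  cases h with
  | ext₁ hr₀ ht₀ hc₀ _ h | tau₁ hr₀ ht₀ hc₀ h =>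
    obtain ⟨rfl, rfl⟩ := override_inj_of_mem hA hB hr ht hr₀ ht₀ hc hc₀ hv
    exact .inl ⟨_, _, hb ▸ h⟩
  | ext₂ hr₀ ht₀ hc₀ _ h | tau₂ hr₀ ht₀ hc₀ h =>
    obtain ⟨rfl, rfl⟩ := override_inj_of_mem hA hB hr ht hr₀ ht₀ hc hc₀ hv
    exact .inr ⟨_, _, hb ▸ h⟩
  | time₁ | time₂ => cases hb
  | sync₁ hr₀ ht₀ hc₀ h₁ h₂ | snd₁ hr₀ ht₀ hc₀ h₁ h₂ =>
    obtain ⟨rfl, rfl⟩ := override_inj_of_mem hA hB hr ht hr₀ ht₀ hc hc₀ hv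
    have hu := hAB.symm.disjoint_H_dom hA (hA.trMem h₁).2
    rcases Bool.or_eq_true_iff.mp hb.symm with rfl | rfl
    · exact .inl ⟨_, _, h₁⟩
    · first
        | exact .inr (hB.comm_of_recv_updV ht hu h₂)
        | exact .inr (hB.comm_of_brecv_updV ht hu h₂)
  | sync₂ hr₀ ht₀ hc₀ h₁ h₂ | snd₂ hr₀ ht₀ hc₀ h₁ h₂ =>
    obtain ⟨rfl, rfl⟩ := override_inj_of_mem hA hB hr ht hr₀ ht₀ hc hc₀ hv
    have hu := hAB.disjoint_H_dom hB (hB.trMem h₁).2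
    rcases Bool.or_eq_true_iff.mp hb.symm with rfl | rfl
    · exact .inr ⟨_, _, h₁⟩
    · first
        | exact .inl (hA.comm_of_recv_updV hr hu h₂)
        | exact .inl (hA.comm_of_brecv_updV hr hu h₂)
  | rcv₁ hr₀ ht₀ hc₀ h₁ h₂ =>
    obtain ⟨rfl, rfl⟩ := override_inj_of_mem hA hB hr ht hr₀ ht₀ hc hc₀ hv
    rcases Bool.or_eq_true_iff.mp hb.symm with rfl | rfl
    · exact .inl ⟨_, _, h₁⟩
    · exact .inr ⟨_, _, h₂⟩
  | rcv₂ hr₀ ht₀ hc₀ h₁ h₂ =>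
    obtain ⟨rfl, rfl⟩ := override_inj_of_mem hA hB hr ht hr₀ ht₀ hc hc₀ hv
    rcases Bool.or_eq_true_iff.mp hb.symm with rfl | rfl
    · exact .inr ⟨_, _, h₁⟩
    · exact .inl ⟨_, _, h₂⟩

end Composition

def parRel (R : Valn Var Data → Valn Var Data → Prop) (T : PreTTSB Var Data BCh CCh)
    (v w : Valn Var Data) : Prop :=
  ∃ r s t, R r s ∧ t ∈ T.S ∧ compatV r t ∧ compatV s t ∧
    v = override r t ∧ w = override s t

section Simulation

variable {X : Set Var} {T1 T2 T3 : PreTTSB Var Data BCh CCh}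
  {R : Valn Var Data → Valn Var Data → Prop} {r s t u v w : Valn Var Data} {D : Set Var}

theorem IsTimedStepSim.eqOn_E (hR : IsTimedStepSim T1 T2 R) (hE : T1.E = T2.E) (h : R r s) :
    Set.EqOn r s T1.E := by
  have := hR.extEq h
  rw [← hE] at this
  exact restrictV_eq_iff_eqOn.mp this

theorem IsTimedStepSim.eqOn_of_disjoint (hR : IsTimedStepSim T1 T2 R) (h1 : IsTTSB X T1)
    (h2 : IsTTSB X T2) (hE : T1.E = T2.E) (h : R r s) (hD1 : Disjoint T1.H D)
    (hD2 : Disjoint T2.H D) : Set.EqOn r s D :=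
  eqOn_of_dom_inter_subset (hR.eqOn_E hE h) (h1.dom_inter_subset (hR.mem h).1 hD1)
    (hE ▸ h2.dom_inter_subset (hR.mem h).2 hD2)

theorem IsTimedStepSim.rel_updV (hR : IsTimedStepSim T1 T2 R) (h1 : IsTTSB X T1)
    (h2 : IsTTSB X T2) (hE : T1.E = T2.E) (h : R r s) (hu1 : Disjoint T1.H (dom u))
    (hu2 : Disjoint T2.H (dom u)) : R (updV r u) (updV s u) := by
  obtain ⟨hr, hs⟩ := hR.mem h
  have hrs : restrictV (override u r) T1.E = restrictV (override u s) T1.E :=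
    restrictV_eq_iff_eqOn.mpr (eqOn_override_right (hR.eqOn_E hE h) u)
  rw [updV_eq_updV_restrictV (h1.dom_inter_subset hr hu1),
    updV_eq_updV_restrictV (h2.dom_inter_subset hs hu2), ← hE, hrs]
  refine hR.updR _ h (dom_restrictV ?_)
  exact dom_override u s ▸ Set.subset_union_of_subset_right (hE ▸ h2.E_subset_dom hs) _

theorem IsTimedStepSim.updV_eq_updV (hR : IsTimedStepSim T1 T2 R) (h1 : IsTTSB X T1)
    (h2 : IsTTSB X T2) (h3 : IsTTSB X T3) (hE : T1.E = T2.E) (h13 : Compatible T1 T3)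
    (h23 : Compatible T2 T3) (h : R r s) (ht : t ∈ T3.S) : updV t r = updV t s :=
  updV_congr <|
    hR.eqOn_of_disjoint h1 h2 hE h (h13.disjoint_H_dom h3 ht) (h23.disjoint_H_dom h3 ht)

theorem IsTimedStepSim.exists_step (hR : IsTimedStepSim T1 T2 R) (h : R r s) {b : Bool}
    {a : Act BCh CCh} {r' : Valn Var Data} (hstep : T1.Tr b r a r') (ha : a ≠ .tau) :
    ∃ s', T2.Tr b s a s' ∧ R r' s' :=
  (hR.stepR h hstep).resolve_right fun h => ha h.1

theorem parRel_override_left (hR : IsTimedStepSim T1 T2 R) (h1 : IsTTSB X T1)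
    (h2 : IsTTSB X T2) (h3 : IsTTSB X T3) (hE : T1.E = T2.E) (h13 : Compatible T1 T3)
    (h23 : Compatible T2 T3) (h : R r s) (ht : t ∈ T3.S) :
    parRel R T3 (override r t) (override s t) := by
  -- `r ▷ t` is `r ‖ t[r]`, and `t[r] = t[s]` because `T3` sees only external variables
  have heq := hR.updV_eq_updV h1 h2 h3 hE h13 h23 h ht
  refine ⟨r, s, updV t r, h, h3.updV_mem ht (h13.symm.disjoint_H_dom h1 (hR.mem h).1),
    compatV_updV r t, heq ▸ compatV_updV s t, (override_updV r t).symm, ?_⟩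
  rw [heq, override_updV]

theorem parRel_override_right (hR : IsTimedStepSim T1 T2 R) (h1 : IsTTSB X T1)
    (h2 : IsTTSB X T2) (h3 : IsTTSB X T3) (hE : T1.E = T2.E) (h13 : Compatible T1 T3)
    (h23 : Compatible T2 T3) (h : R r s) (ht : t ∈ T3.S) :
    parRel R T3 (override t r) (override t s) :=
  ⟨updV r t, updV s t, t,
    hR.rel_updV h1 h2 hE h (h13.disjoint_H_dom h3 ht) (h23.disjoint_H_dom h3 ht), ht,
    (compatV_updV t r).symm, (compatV_updV t s).symm,
    override_eq_override_updV t r, override_eq_override_updV t s⟩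

theorem parRel_extEq (hR : IsTimedStepSim T1 T2 R) (h1 : IsTTSB X T1) (h2 : IsTTSB X T2)
    (h3 : IsTTSB X T3) (hE : T1.E = T2.E) (h13 : Compatible T1 T3) (h23 : Compatible T2 T3)
    (h : parRel R T3 v w) : restrictV v (par T1 T3).E = restrictV w (par T2 T3).E := by
  obtain ⟨r, s, t, hrs, ht, -, -, rfl, rfl⟩ := h
  have hdom := hR.eqOn_of_disjoint h1 h2 hE hrs (h13.disjoint_H_dom h3 ht)
    (h23.disjoint_H_dom h3 ht)
  change restrictV _ (T1.E ∪ T3.E) = restrictV _ (T2.E ∪ T3.E)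
  rw [← hE, restrictV_eq_iff_eqOn]
  exact eqOn_override_left ((hR.eqOn_E hE hrs).union (hdom.mono (h3.E_subset_dom ht))) t

theorem parRel_updV (hR : IsTimedStepSim T1 T2 R) (h1 : IsTTSB X T1) (h2 : IsTTSB X T2)
    (h3 : IsTTSB X T3) (hE : T1.E = T2.E) (h13 : Compatible T1 T3) (h23 : Compatible T2 T3)
    (h : parRel R T3 v w) (hu : dom u = (par T1 T3).E) :
    parRel R T3 (updV v u) (updV w u) := by
  obtain ⟨r, s, t, hrs, ht, hcr, hcs, rfl, rfl⟩ := h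
  change dom u = T1.E ∪ T3.E at hu
  have hu1 : Disjoint T1.H (dom u) := hu ▸ Set.disjoint_union_right.mpr
    ⟨h1.disjEH.symm, h13.disjoint_H_V.mono_right Set.subset_union_left⟩
  have hu2 : Disjoint T2.H (dom u) := hu ▸ hE ▸ Set.disjoint_union_right.mpr
    ⟨h2.disjEH.symm, h23.disjoint_H_V.mono_right Set.subset_union_left⟩
  have hu3 : Disjoint T3.H (dom u) := hu ▸ Set.disjoint_union_right.mpr
    ⟨h13.symm.disjoint_H_V.mono_right Set.subset_union_left, h3.disjEH.symm⟩
  rw [updV_override, updV_override]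
  exact ⟨_, _, _, hR.rel_updV h1 h2 hE hrs hu1 hu2, h3.updV_mem ht hu3, hcr.updV u,
    hcs.updV u, rfl, rfl⟩

theorem parRel_comm (hR : IsTimedStepSim T1 T2 R) (h1 : IsTTSB X T1) (h2 : IsTTSB X T2)
    (h3 : IsTTSB X T3) (h13 : Compatible T1 T3) (h23 : Compatible T2 T3)
    (h : parRel R T3 v w) (hw : (par T2 T3).Comm w) : (par T1 T3).Comm v := by
  obtain ⟨r, s, t, hrs, ht, hcr, hcs, rfl, rfl⟩ := h
  obtain ⟨hr, hs⟩ := hR.mem hrs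
  rcases comm_of_comm_par h2 h3 h23 hs ht hcs hw with hc | hc
  · exact comm_par_of_comm_left h1 h3 h13 hr ht hcr (hR.commR hrs hc)
  · exact comm_par_of_comm_right h1 h3 h13 hr ht hcr hc

theorem parRel_step (hR : IsTimedStepSim T1 T2 R) (h1 : IsTTSB X T1) (h2 : IsTTSB X T2)
    (h3 : IsTTSB X T3) (hE : T1.E = T2.E) (h13 : Compatible T1 T3) (h23 : Compatible T2 T3)
    {b : Bool} {a : Act BCh CCh} {v' : Valn Var Data} (h : parRel R T3 v w)
    (hstep : ParTr T1 T3 b v a v') :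
    (∃ w', ParTr T2 T3 b w a w' ∧ parRel R T3 v' w') ∨ (a = .tau ∧ parRel R T3 v' w) := by
  obtain ⟨r, s, t, hrs, ht, hcr, hcs, rfl, rfl⟩ := h
  obtain ⟨hr, hs⟩ := hR.mem hrs
  have left {r' s' t'} (h : R r' s') (ht' : t' ∈ T3.S) :=
    parRel_override_left hR h1 h2 h3 hE h13 h23 h ht'
  have right {r' s' t'} (h : R r' s') (ht' : t' ∈ T3.S) :=
    parRel_override_right hR h1 h2 h3 hE h13 h23 h ht'
  have updV_eq {r' s'} (h : R r' s') := hR.updV_eq_updV h1 h2 h3 hE h13 h23 h ht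
  have rel_updV {t'} (ht' : t' ∈ T3.S) :=
    hR.rel_updV h1 h2 hE hrs (h13.disjoint_H_dom h3 ht') (h23.disjoint_H_dom h3 ht')
  generalize hv : override r t = v at hstep
  cases hstep with
  | ext₁ hr₀ ht₀ hc₀ ha h₁ =>
    obtain ⟨rfl, rfl⟩ := override_inj_of_mem h1 h3 hr ht hr₀ ht₀ hcr hc₀ hv
    obtain ⟨s', hs', h'⟩ := hR.exists_step hrs h₁ (by rintro rfl; exact ha)
    exact .inl ⟨_, .ext₁ hs ht hcs ha hs', left h' ht⟩
  | ext₂ hr₀ ht₀ hc₀ ha h₃ =>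
    obtain ⟨rfl, rfl⟩ := override_inj_of_mem h1 h3 hr ht hr₀ ht₀ hcr hc₀ hv
    exact .inl ⟨_, .ext₂ hs ht hcs ha h₃, right hrs (h3.trMem h₃).2⟩
  | tau₁ hr₀ ht₀ hc₀ h₁ hcm =>
    obtain ⟨rfl, rfl⟩ := override_inj_of_mem h1 h3 hr ht hr₀ ht₀ hcr hc₀ hv
    rcases hR.stepR hrs h₁ with ⟨s', hs', h'⟩ | ⟨-, h'⟩
    · exact .inl ⟨_, .tau₁ hs ht hcs hs' hcm, left h' ht⟩
    · exact .inr ⟨rfl, left h' ht⟩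
  | tau₂ hr₀ ht₀ hc₀ h₃ hcm =>
    obtain ⟨rfl, rfl⟩ := override_inj_of_mem h1 h3 hr ht hr₀ ht₀ hcr hc₀ hv
    exact .inl ⟨_, .tau₂ hs ht hcs h₃ (hcm ∘ hR.commR hrs), right hrs (h3.trMem h₃).2⟩
  | sync₁ hr₀ ht₀ hc₀ h₁ h₃ hcm =>
    obtain ⟨rfl, rfl⟩ := override_inj_of_mem h1 h3 hr ht hr₀ ht₀ hcr hc₀ hv
    obtain ⟨s', hs', h'⟩ := hR.exists_step hrs h₁ nofun
    rw [updV_eq h'] at h₃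
    exact .inl ⟨_, .sync₁ hs ht hcs hs' h₃ (hcm ∘ Or.imp_left (hR.commR hrs)),
      right h' (h3.trMem h₃).2⟩
  | sync₂ hr₀ ht₀ hc₀ h₃ h₁ hcm =>
    obtain ⟨rfl, rfl⟩ := override_inj_of_mem h1 h3 hr ht hr₀ ht₀ hcr hc₀ hv
    obtain ⟨s', hs', h'⟩ := hR.exists_step (rel_updV (h3.trMem h₃).2) h₁ nofun
    exact .inl ⟨_, .sync₂ hs ht hcs h₃ hs' (hcm ∘ Or.imp_right (hR.commR hrs)),
      left h' (h3.trMem h₃).2⟩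
  | time₁ hr₀ ht₀ hc₀ h₁ h₃ =>
    obtain ⟨rfl, rfl⟩ := override_inj_of_mem h1 h3 hr ht hr₀ ht₀ hcr hc₀ hv
    obtain ⟨s', hs', h'⟩ := hR.exists_step hrs h₁ nofun
    exact .inl ⟨_, .time₁ hs ht hcs hs' h₃, left h' (h3.trMem h₃).2⟩
  | time₂ hr₀ ht₀ hc₀ h₃ h₁ =>
    obtain ⟨rfl, rfl⟩ := override_inj_of_mem h1 h3 hr ht hr₀ ht₀ hcr hc₀ hv
    obtain ⟨s', hs', h'⟩ := hR.exists_step hrs h₁ nofun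
    exact .inl ⟨_, .time₂ hs ht hcs h₃ hs', right h' (h3.trMem h₃).2⟩
  | snd₁ hr₀ ht₀ hc₀ h₁ h₃ =>
    obtain ⟨rfl, rfl⟩ := override_inj_of_mem h1 h3 hr ht hr₀ ht₀ hcr hc₀ hv
    obtain ⟨s', hs', h'⟩ := hR.exists_step hrs h₁ nofun
    rw [updV_eq h'] at h₃
    exact .inl ⟨_, .snd₁ hs ht hcs hs' h₃, left h' (h3.trMem h₃).2⟩
  | snd₂ hr₀ ht₀ hc₀ h₃ h₁ =>
    obtain ⟨rfl, rfl⟩ := override_inj_of_mem h1 h3 hr ht hr₀ ht₀ hcr hc₀ hv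
    obtain ⟨s', hs', h'⟩ := hR.exists_step (rel_updV (h3.trMem h₃).2) h₁ nofun
    exact .inl ⟨_, .snd₂ hs ht hcs h₃ hs', right h' (h3.trMem h₃).2⟩
  | rcv₁ hr₀ ht₀ hc₀ h₁ h₃ =>
    obtain ⟨rfl, rfl⟩ := override_inj_of_mem h1 h3 hr ht hr₀ ht₀ hcr hc₀ hv
    obtain ⟨s', hs', h'⟩ := hR.exists_step hrs h₁ nofun
    exact .inl ⟨_, .rcv₁ hs ht hcs hs' h₃, left h' (h3.trMem h₃).2⟩
  | rcv₂ hr₀ ht₀ hc₀ h₃ h₁ =>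
    obtain ⟨rfl, rfl⟩ := override_inj_of_mem h1 h3 hr ht hr₀ ht₀ hcr hc₀ hv
    obtain ⟨s', hs', h'⟩ := hR.exists_step hrs h₁ nofun
    exact .inl ⟨_, .rcv₂ hs ht hcs h₃ hs', right h' (h3.trMem h₃).2⟩

theorem IsTimedStepSim.par_right (hR : IsTimedStepSim T1 T2 R) (h1 : IsTTSB X T1)
    (h2 : IsTTSB X T2) (h3 : IsTTSB X T3) (hE : T1.E = T2.E) (h13 : Compatible T1 T3)
    (h23 : Compatible T2 T3) : IsTimedStepSim (par T1 T3) (par T2 T3) (parRel R T3) where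
  mem := by
    rintro _ _ ⟨r, s, t, hrs, ht, hcr, hcs, rfl, rfl⟩
    exact ⟨⟨r, (hR.mem hrs).1, t, ht, hcr, rfl⟩, ⟨s, (hR.mem hrs).2, t, ht, hcs, rfl⟩⟩
  initR := ⟨_, _, _, hR.initR, h3.initMem, h13.2.2, h23.2.2, rfl, rfl⟩
  extEq := parRel_extEq hR h1 h2 h3 hE h13 h23
  updR u h hu := parRel_updV hR h1 h2 h3 hE h13 h23 h hu
  commR := parRel_comm hR h1 h2 h3 h13 h23
  stepR := parRel_step hR h1 h2 h3 hE h13 h23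

end Simulation

/-- Theorem 3: the timed step simulation preorder is a precongruence for
parallel composition. -/
theorem simLE_par_precongruence (X : Set Var) (T1 T2 T3 : PreTTSB Var Data BCh CCh)
    (h1 : IsTTSB X T1) (h2 : IsTTSB X T2) (h3 : IsTTSB X T3)
    (hcmp : Comparable T1 T2) (hle : simLE T1 T2)
    (h13 : Compatible T1 T3) (h23 : Compatible T2 T3) :
    simLE (par T1 T3) (par T2 T3) := by
  obtain ⟨R, hR⟩ := hle
  exact ⟨parRel R T3, hR.par_right h1 h2 h3 hcmp h13 h23⟩

end TTSBpaper
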